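/- arXiv:math/9810080 — 2 statements merged into one kernel-verified Lean document; each statement's English description precedes it below -/
import Mathlib

section
/- Let X be a topological space. Every union of g.Λ_s-sets of X is a g.Λ_s-set, and every intersection of g.V_s-sets of X is a g.V_s-set. -/
open Set

/-- A set is semi-open if it sits between an open set and its closure. -/
def SemiOpen {X : Type*} [TopologicalSpace X] (A : Set X) : Prop :=
  ∃ O : Set X, IsOpen O ∧ O ⊆ A ∧ A ⊆ closure O

/-- A set is semi-closed if its complement is semi-open. -/
def SemiClosed {X : Type*} [TopologicalSpace X] (A : Set X) : Prop :=
  SemiOpen Aᶜ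

/-- The Λ_s-kernel of `B`: the intersection of all semi-open sets containing `B`. -/
def lambdaS {X : Type*} [TopologicalSpace X] (B : Set X) : Set X :=
  ⋂₀ {O : Set X | SemiOpen O ∧ B ⊆ O}

/-- The V_s-kernel of `B`: the union of all semi-closed sets contained in `B`. -/
def vS {X : Type*} [TopologicalSpace X] (B : Set X) : Set X :=
  ⋃₀ {F : Set X | SemiClosed F ∧ F ⊆ B}

/-- `B` is a Λ_s-set if it equals its Λ_s-kernel. -/
def IsLambdaS {X : Type*} [TopologicalSpace X] (B : Set X) : Prop :=
  B = lambdaS B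

/-- `B` is a V_s-set if it equals its V_s-kernel. -/
def IsVS {X : Type*} [TopologicalSpace X] (B : Set X) : Prop :=
  B = vS B

/-- `B` is a g.Λ_s-set if `B^{Λ_s} ⊆ F` whenever `B ⊆ F` and `F` is semi-closed. -/
def IsGLambdaS {X : Type*} [TopologicalSpace X] (B : Set X) : Prop :=
  ∀ F : Set X, SemiClosed F → B ⊆ F → lambdaS B ⊆ F

/-- `B` is a g.V_s-set if its complement is a g.Λ_s-set. -/
def IsGVS {X : Type*} [TopologicalSpace X] (B : Set X) : Prop :=
  IsGLambdaS Bᶜ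

/-- The semi-closure of `B`: the intersection of all semi-closed sets containing `B`. -/
def sCl {X : Type*} [TopologicalSpace X] (B : Set X) : Set X :=
  ⋂₀ {F : Set X | SemiClosed F ∧ B ⊆ F}

/-- `B` is sg-closed if `sCl B ⊆ O` whenever `B ⊆ O` and `O` is semi-open. -/
def SgClosed {X : Type*} [TopologicalSpace X] (B : Set X) : Prop :=
  ∀ O : Set X, SemiOpen O → B ⊆ O → sCl B ⊆ O
lemma semiOpen_iUnion {X : Type*} [TopologicalSpace X] {ι : Sort*} {A : ι → Set X}
    (h : ∀ i, SemiOpen (A i)) : SemiOpen (⋃ i, A i) := by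
  choose O hO h1 h2 using h
  refine ⟨⋃ i, O i, isOpen_iUnion hO, iUnion_mono h1, ?_⟩
  exact iUnion_subset fun i => (h2 i).trans (closure_mono (subset_iUnion O i))

lemma gLambdaS_sUnion {X : Type*} [TopologicalSpace X]
    (S : Set (Set X)) (hS : ∀ B ∈ S, IsGLambdaS B) : IsGLambdaS (⋃₀ S) := by
  intro F hF hsub x hx
  by_contra hxF
  have key : ∀ B : S, ∃ U : Set X, (SemiOpen U ∧ (B : Set X) ⊆ U) ∧ x ∉ U := by
    rintro ⟨B, hB⟩
    have hsub' : lambdaS B ⊆ F :=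
      hS B hB F hF ((subset_sUnion_of_mem hB).trans hsub)
    have : x ∉ lambdaS B := fun hxl => hxF (hsub' hxl)
    simpa [lambdaS, mem_sInter, not_forall, and_assoc] using this
  choose U hU hxU using key
  have hV : SemiOpen (⋃ B : S, U B) := semiOpen_iUnion fun B => (hU B).1
  have hsubV : ⋃₀ S ⊆ ⋃ B : S, U B := by
    rintro y ⟨B, hB, hy⟩
    exact mem_iUnion.2 ⟨⟨B, hB⟩, (hU ⟨B, hB⟩).2 hy⟩
  have : x ∈ ⋃ B : S, U B := hx _ ⟨hV, hsubV⟩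
  obtain ⟨B, hxB⟩ := mem_iUnion.1 this
  exact hxU B hxB

theorem sUnion_gLambdaS_and_sInter_gVS {X : Type*} [TopologicalSpace X] :
    (∀ S : Set (Set X), (∀ B ∈ S, IsGLambdaS B) → IsGLambdaS (⋃₀ S)) ∧
    (∀ S : Set (Set X), (∀ B ∈ S, IsGVS B) → IsGVS (⋂₀ S)) := by
  refine ⟨gLambdaS_sUnion, fun S hS => ?_⟩
  unfold IsGVS
  rw [compl_sInter]
  exact gLambdaS_sUnion _ (by rintro B ⟨C, hC, rfl⟩; exact hS C hC)
end

section
/- Let X be a topological space and let B be a g.V_s-set of X. Then the set B^{V_s} ∪ Bᶜ is semi-closed if and only if B is a V_s-set. Moreover, for every semi-closed set F with B^{V_s} ∪ Bᶜ ⊆ F, one has F = X. -/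
open Set

lemma vS_eq_compl_lambdaS {X : Type*} [TopologicalSpace X] (B : Set X) :
    vS B = (lambdaS Bᶜ)ᶜ := by
  ext x
  simp only [vS, lambdaS, SemiClosed, mem_sUnion, mem_compl_iff, mem_sInter, mem_setOf_eq,
    not_forall]
  constructor
  · rintro ⟨F, ⟨hF, hFB⟩, hx⟩
    exact ⟨Fᶜ, ⟨⟨hF, fun y hy => fun hyF => hy (hFB hyF)⟩, by simpa using hx⟩⟩
  · rintro ⟨O, ⟨hO, hBO⟩, hx⟩
    exact ⟨Oᶜ, ⟨by simpa [SemiClosed] using hO,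
      fun y hy => by_contra fun h => hy (hBO h)⟩, hx⟩

lemma vS_subset {X : Type*} [TopologicalSpace X] (B : Set X) : vS B ⊆ B := by
  rintro x ⟨F, ⟨_, hFB⟩, hx⟩
  exact hFB hx

lemma semiClosed_univ {X : Type*} [TopologicalSpace X] : SemiClosed (Set.univ : Set X) :=
  ⟨∅, isOpen_empty, by simp⟩

theorem gVS_semiClosed_union_compl {X : Type*} [TopologicalSpace X] {B : Set X}
    (hB : IsGVS B) :
    (SemiClosed (vS B ∪ Bᶜ) ↔ IsVS B) ∧
    (∀ F : Set X, SemiClosed F → vS B ∪ Bᶜ ⊆ F → F = Set.univ) := by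
  have key : ∀ F : Set X, SemiClosed F → vS B ∪ Bᶜ ⊆ F → F = Set.univ := by
    intro F hF hsub
    have h1 : Bᶜ ⊆ F := (subset_union_right).trans hsub
    have h2 : lambdaS Bᶜ ⊆ F := hB F hF h1
    have h3 : Fᶜ ⊆ F := by
      intro x hx
      have hxv : x ∉ vS B := fun h => hx (hsub (Or.inl h))
      have : x ∈ lambdaS Bᶜ := by
        have := vS_eq_compl_lambdaS B
        rw [this] at hxv
        simpa using hxv
      exact h2 this
    rw [Set.eq_univ_iff_forall]
    intro x
    by_cases h : x ∈ F
    · exact h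
    · exact h3 h
  refine ⟨⟨fun h => ?_, fun h => ?_⟩, key⟩
  · have := key _ h (subset_refl _)
    refine Set.Subset.antisymm (fun x hx => ?_) (vS_subset B)
    have : x ∈ vS B ∪ Bᶜ := this ▸ Set.mem_univ x
    rcases this with h' | h'
    · exact h'
    · exact absurd hx h'
  · have : vS B ∪ Bᶜ = Set.univ := by
      rw [← h]; simp [Set.union_compl_self]
    rw [this]
    exact semiClosed_univ
end
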